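/- For rotor configurations ρ and ρ' on G, the following are equivalent: (a) σρ = σρ' for some particle configuration σ; (b) σρ = σρ' for all recurrent particle configurations σ ∈ S(G/T); (c) eρ = eρ', where e is the identity element of the sandpile group S(G/T); (d) σρ = σρ' for all particle configurations σ with σ(v) ≥ e(v) for every v ∈ V0. -/

import Mathlib

/-!
Follow all particles at once: a state is a pair (particles on `V₀`, rotors), and firing a
particle at `v` turns the rotor of `v` and moves the particle along the new rotor arc.
Firings at distinct vertices commute, so by Church–Rosser `σρ` is the unique rotor
configuration reached from `(σ, ρ)` once every particle has left `V₀`. Hence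
`(σ + τ)ρ = τ(σρ)`. Firing `d(v)` particles at `v` turns its rotor once around and sends one
particle along each arc, i.e. topples `v`; so `σ°ρ = σρ`. Now `e = (τ + σ)°` for some `τ`
gives `eρ = τ(σρ)`, and `σ = (e + σ)°` for recurrent `σ` gives `σρ = σ(eρ)`, which yields
all the implications.
-/

open Function

/-- A strongly connected finite directed multigraph (self-loops and multiple arcs
allowed), given by source and head maps `src, head : E → V`, together with a nonempty
target set `T` and a rotor mechanism at each vertex: `next` is a cyclic ordering of
the arcs emanating from each vertex (it permutes the arcs, preserves the source, and
acts transitively on the arcs emanating from any fixed vertex). -/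
structure RotorSystem (V E : Type) [Fintype V] [DecidableEq V] [Fintype E]
    [DecidableEq E] where
  src : E → V
  head : E → V
  T : Finset V
  T_nonempty : T.Nonempty
  strongly_connected : ∀ v w : V,
    Relation.ReflTransGen (fun a b => ∃ e : E, src e = a ∧ head e = b) v w
  next : E → E
  next_src : ∀ e, src (next e) = src e
  next_bijective : Function.Bijective next
  next_cyclic : ∀ e e', src e = src e' → ∃ k : ℕ, next^[k] e = e'

namespace RotorSystem

variable {V E : Type} [Fintype V] [DecidableEq V] [Fintype E] [DecidableEq E]

/-- The set `V₀ = V - T` of non-target vertices. -/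
abbrev V0 (S : RotorSystem V E) : Type := {v : V // v ∉ S.T}

/-- A rotor configuration: each non-target vertex carries an arc emanating from it. -/
abbrev RConf (S : RotorSystem V E) : Type :=
  {ρ : S.V0 → E // ∀ v : S.V0, S.src (ρ v) = v.1}

/-- A particle configuration: a number of particles at each non-target vertex. -/
abbrev PConf (S : RotorSystem V E) : Type := S.V0 → ℕ

variable (S : RotorSystem V E)

/-- One step of a single particle's rotor walk: at a non-target vertex the rotor is
first progressed and the particle then moves along the new rotor arc; target vertices
absorb the particle. -/
def step (p : V × S.RConf) : V × S.RConf :=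
  if h : p.1 ∈ S.T then p
  else
    (S.head (S.next (p.2.1 ⟨p.1, h⟩)),
      ⟨Function.update p.2.1 ⟨p.1, h⟩ (S.next (p.2.1 ⟨p.1, h⟩)), by
        intro w
        rcases eq_or_ne w ⟨p.1, h⟩ with rfl | hw
        · rw [Function.update_self, S.next_src]
          exact p.2.2 ⟨p.1, h⟩
        · rw [Function.update_of_ne hw]
          exact p.2.2 w⟩)

open Classical in
/-- Route a single particle from `x` by rotor walk until it first reaches the target
set; the result is the pair (final position, final rotor configuration). -/
noncomputable def route (x : V) (ρ : S.RConf) : V × S.RConf :=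
  if h : ∃ n, (S.step^[n] (x, ρ)).1 ∈ S.T then S.step^[Nat.find h] (x, ρ) else (x, ρ)

/-- `t_x(ρ)`: the target vertex reached by a single particle started at `x` with
initial rotor configuration `ρ`. -/
noncomputable def tgt (x : V) (ρ : S.RConf) : V := (S.route x ρ).1

/-- The particle addition operator `E_v`: add one particle at `v` and route it to the
target set. -/
noncomputable def addAt (v : S.V0) (ρ : S.RConf) : S.RConf := (S.route v.1 ρ).2

/-- The action `σρ` of a particle configuration on a rotor configuration: place
`σ v` particles at each vertex `v` and route them all to the target set. -/
noncomputable def act (σ : S.PConf) (ρ : S.RConf) : S.RConf :=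
  (Finset.univ : Finset S.V0).toList.foldr (fun v r => (S.addAt v)^[σ v] r) ρ

/-- Equivalence of rotor configurations: `ρ ≡ ρ'` iff `σρ = σρ'` for some particle
configuration `σ`. -/
def REquiv (ρ ρ' : S.RConf) : Prop := ∃ σ : S.PConf, S.act σ ρ = S.act σ ρ'

/-- The outdegree `d(v)`. -/
def outdeg (v : V) : ℕ := (Finset.univ.filter fun e : E => S.src e = v).card

/-- The number `d(v,w)` of arcs from `v` to `w`. -/
def numArcs (v w : V) : ℕ :=
  (Finset.univ.filter fun e : E => S.src e = v ∧ S.head e = w).card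

/-- A particle configuration is stable if every non-target vertex holds at most
`d(v) - 1` particles. -/
def IsStable (σ : S.PConf) : Prop := ∀ v : S.V0, σ v < S.outdeg v.1

/-- Parallel toppling: every unstable vertex topples once, sending one particle along
each arc emanating from it. -/
def toppleStep (σ : S.PConf) : S.PConf := fun v =>
  (if S.outdeg v.1 ≤ σ v then σ v - S.outdeg v.1 else σ v) +
    ∑ w : S.V0, (if S.outdeg w.1 ≤ σ w then S.numArcs w.1 v.1 else 0)

open Classical in
/-- The stabilization `σ°` of a particle configuration. -/
noncomputable def stabilize (σ : S.PConf) : S.PConf :=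
  if h : ∃ n, S.IsStable (S.toppleStep^[n] σ) then S.toppleStep^[Nat.find h] σ else σ

/-- A stable particle configuration is recurrent if it is reachable (by adding
particles and stabilizing) from every particle configuration.  The recurrent
configurations form the sandpile group `S(G/T)` under addition-then-stabilization. -/
def IsRecurrent (τ : S.PConf) : Prop :=
  S.IsStable τ ∧ ∀ σ : S.PConf, ∃ τ' : S.PConf, τ = S.stabilize (τ' + σ)

/-- `e` is the identity element of the sandpile group `S(G/T)`. -/
def IsSandpileIdentity (e : S.PConf) : Prop :=
  S.IsRecurrent e ∧ ∀ τ : S.PConf, S.IsRecurrent τ → S.stabilize (e + τ) = τ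

/-- The rotor arcs of `ρ`, as a relation on vertices. -/
def rotorRel (ρ : S.RConf) (a b : V) : Prop :=
  ∃ h : a ∉ S.T, S.head (ρ.1 ⟨a, h⟩) = b

/-- A rotor configuration is acyclic if its rotor arcs contain no directed cycle. -/
def IsAcyclicConf (ρ : S.RConf) : Prop :=
  ∀ v : V, ¬ Relation.TransGen (S.rotorRel ρ) v v

/-- `ρ'` is obtained from `ρ` by pushing a cycle: there are distinct non-target
vertices `v_0, …, v_{r-1}` with the rotor arc of `v_j` pointing to `v_{j+1}`
(cyclically); each such rotor is regressed one step, other rotors are unchanged. -/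
def IsCyclePush (ρ ρ' : S.RConf) : Prop :=
  ∃ r : ℕ, 0 < r ∧ ∃ f : ZMod r → S.V0, Function.Injective f ∧
    (∀ j : ZMod r, S.head (ρ.1 (f j)) = (f (j + 1)).1) ∧
    (∀ j : ZMod r, S.next (ρ'.1 (f j)) = ρ.1 (f j)) ∧
    (∀ v : S.V0, v ∉ Set.range f → ρ'.1 v = ρ.1 v)

end RotorSystem

namespace RotorSystem

open Finset Relation

variable {V E : Type} [Fintype V] [DecidableEq V] [Fintype E] [DecidableEq E]
variable (S : RotorSystem V E)

lemma src_iterate_next (k : ℕ) (e : E) : S.src (S.next^[k] e) = S.src e := by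
  induction k with
  | zero => rfl
  | succ k ih => rw [iterate_succ_apply', S.next_src, ih]

lemma minimalPeriod_next_pos (e : E) : 0 < minimalPeriod S.next e :=
  minimalPeriod_pos_of_mem_periodicPts (S.next_bijective.injective.mem_periodicPts e)

lemma image_range_minimalPeriod_next (e : E) :
    (range (minimalPeriod S.next e)).image (S.next^[·] e) =
      univ.filter (S.src · = S.src e) := by
  ext e'
  simp only [mem_image, mem_range, mem_filter, mem_univ, true_and]
  constructor
  · rintro ⟨k, -, rfl⟩
    exact S.src_iterate_next k e
  · intro h
    obtain ⟨k, rfl⟩ := S.next_cyclic e e' h.symm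
    exact ⟨k % minimalPeriod S.next e, Nat.mod_lt _ (S.minimalPeriod_next_pos e),
      iterate_mod_minimalPeriod_eq⟩

lemma injOn_range_minimalPeriod_next (e : E) :
    Set.InjOn (S.next^[·] e) (range (minimalPeriod S.next e)) := by
  rw [coe_range]
  exact iterate_injOn_Iio_minimalPeriod

lemma minimalPeriod_next (e : E) : minimalPeriod S.next e = S.outdeg (S.src e) := by
  rw [outdeg, ← S.image_range_minimalPeriod_next, card_image_of_injOn
    (S.injOn_range_minimalPeriod_next e), card_range]

lemma iterate_next_outdeg (e : E) : S.next^[S.outdeg (S.src e)] e = e := by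
  rw [← minimalPeriod_next]
  exact iterate_minimalPeriod

lemma sum_range_outdeg_iterate_next {M : Type*} [AddCommMonoid M] (f : E → M) (e : E) :
    ∑ i ∈ range (S.outdeg (S.src e)), f (S.next^[i] e) =
      ∑ e' ∈ univ.filter (S.src · = S.src e), f e' := by
  rw [← minimalPeriod_next, ← S.image_range_minimalPeriod_next,
    sum_image (S.injOn_range_minimalPeriod_next e)]

lemma exists_ge_iterate_next_eq {e e' : E} (h : S.src e' = S.src e) (K : ℕ) :
    ∃ k, K ≤ k ∧ S.next^[k] e = e' := by
  obtain ⟨k, rfl⟩ := S.next_cyclic e e' h.symm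
  refine ⟨k + minimalPeriod S.next e * K,
    le_add_left (Nat.le_mul_of_pos_left K (S.minimalPeriod_next_pos e)), ?_⟩
  rw [← iterate_mod_minimalPeriod_eq, Nat.add_mul_mod_self_left, iterate_mod_minimalPeriod_eq]

def turn (v : S.V0) (ρ : S.RConf) : S.RConf :=
  ⟨update ρ.1 v (S.next (ρ.1 v)), fun w => by
    rcases eq_or_ne w v with rfl | hw
    · rw [update_self, S.next_src, ρ.2]
    · rw [update_of_ne hw, ρ.2]⟩

lemma turn_apply_self (v : S.V0) (ρ : S.RConf) : (S.turn v ρ).1 v = S.next (ρ.1 v) :=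
  update_self _ _ _

lemma turn_iterate_val (v : S.V0) (j : ℕ) (ρ : S.RConf) :
    ((S.turn v)^[j] ρ).1 = update ρ.1 v (S.next^[j] (ρ.1 v)) := by
  induction j with
  | zero => simp
  | succ j ih => simp [iterate_succ_apply', turn, ih]

lemma turn_iterate_outdeg (v : S.V0) (ρ : S.RConf) : (S.turn v)^[S.outdeg v.1] ρ = ρ := by
  apply Subtype.ext
  rw [turn_iterate_val, ← ρ.2 v, iterate_next_outdeg, update_eq_self]

def particle (x : V) : S.PConf := fun w => if w.1 = x then 1 else 0

lemma particle_eq_single {x : V} (hx : x ∉ S.T) : S.particle x = Pi.single ⟨x, hx⟩ 1 := by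
  ext w
  simp [particle, Pi.single_apply, Subtype.ext_iff]

lemma particle_eq_zero {x : V} (hx : x ∈ S.T) : S.particle x = 0 := by
  ext w
  have : w.1 ≠ x := fun h => w.2 (h ▸ hx)
  simp [particle, this]

/-- States of the particle-firing system: particles arriving in `T` are discarded. -/
abbrev State : Type := S.PConf × S.RConf

def fire (v : S.V0) (s : S.State) : S.State :=
  (s.1 - Pi.single v 1 + S.particle (S.head (S.next (s.2.1 v))), S.turn v s.2)

def Fires (s t : S.State) : Prop := ∃ v, s.1 v ≠ 0 ∧ t = S.fire v s

abbrev Reaches : S.State → S.State → Prop := ReflTransGen S.Fires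

lemma fires_single (v : S.V0) (ρ : S.RConf) :
    S.Fires (Pi.single v 1, ρ) (S.particle (S.head (S.next (ρ.1 v))), S.turn v ρ) :=
  ⟨v, by simp, by rw [fire, tsub_self, zero_add]⟩

lemma fire_comm {v w : S.V0} (hvw : v ≠ w) {s : S.State} (hv : s.1 v ≠ 0) (hw : s.1 w ≠ 0) :
    S.fire v (S.fire w s) = S.fire w (S.fire v s) := by
  have hv' : (S.turn w s.2).1 v = s.2.1 v := update_of_ne hvw _ _
  have hw' : (S.turn v s.2).1 w = s.2.1 w := update_of_ne hvw.symm _ _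
  refine Prod.ext ?_ (Subtype.ext ?_)
  · ext x
    simp only [fire, hv', hw', Pi.add_apply, Pi.sub_apply]
    rcases eq_or_ne x v with rfl | hxv
    · simp only [Pi.single_eq_same, Pi.single_eq_of_ne hvw]
      omega
    rcases eq_or_ne x w with rfl | hxw
    · simp only [Pi.single_eq_same, Pi.single_eq_of_ne hxv]
      omega
    simp only [Pi.single_eq_of_ne hxv, Pi.single_eq_of_ne hxw]
    omega
  · change update (S.turn w s.2).1 v (S.next ((S.turn w s.2).1 v)) =
      update (S.turn v s.2).1 w (S.next ((S.turn v s.2).1 w))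
    rw [hv', hw']
    exact update_comm hvw.symm _ _ _

lemma fire_ne_zero {v w : S.V0} (hvw : v ≠ w) {s : S.State} (hw : s.1 w ≠ 0) :
    (S.fire v s).1 w ≠ 0 := by
  simp only [fire, Pi.add_apply, Pi.sub_apply, Pi.single_apply, if_neg hvw.symm]
  omega

lemma fires_diamond {s t u : S.State} (ht : S.Fires s t) (hu : S.Fires s u) :
    ∃ r, ReflGen S.Fires t r ∧ S.Reaches u r := by
  obtain ⟨v, hv, rfl⟩ := ht
  obtain ⟨w, hw, rfl⟩ := hu
  rcases eq_or_ne v w with rfl | hvw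
  · exact ⟨_, ReflGen.refl, ReflTransGen.refl⟩
  · refine ⟨S.fire w (S.fire v s), ReflGen.single ⟨w, S.fire_ne_zero hvw hw, rfl⟩,
      ReflTransGen.single ⟨v, S.fire_ne_zero hvw.symm hv, ?_⟩⟩
    exact (S.fire_comm hvw hv hw).symm

lemma eq_of_reaches_zero {κ : S.RConf} {t : S.State} (h : S.Reaches (0, κ) t) : t = (0, κ) := by
  rcases h.cases_head with rfl | ⟨_, ⟨v, hv, _⟩, _⟩
  · rfl
  · exact absurd rfl hv

/-- Church–Rosser: firing is locally confluent and no firing starts from `(0, κ)`. -/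
lemma reaches_zero_unique {s : S.State} {κ κ' : S.RConf} (h : S.Reaches s (0, κ))
    (h' : S.Reaches s (0, κ')) : κ = κ' := by
  obtain ⟨r, hr, hr'⟩ := church_rosser (fun _ _ _ => S.fires_diamond) h h'
  rw [S.eq_of_reaches_zero hr] at hr'
  exact congrArg Prod.snd (S.eq_of_reaches_zero hr')

lemma fire_add_particles (v : S.V0) {s : S.State} (hv : s.1 v ≠ 0) (m : S.PConf) :
    S.fire v (s.1 + m, s.2) = ((S.fire v s).1 + m, (S.fire v s).2) := by
  refine Prod.ext ?_ rfl
  ext x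
  simp only [fire, Pi.add_apply, Pi.sub_apply]
  rcases eq_or_ne x v with rfl | hxv
  · simp only [Pi.single_eq_same]
    omega
  simp only [Pi.single_eq_of_ne hxv]
  omega

lemma reaches_add_particles {s t : S.State} (h : S.Reaches s t) (m : S.PConf) :
    S.Reaches (s.1 + m, s.2) (t.1 + m, t.2) := by
  induction h with
  | refl => exact ReflTransGen.refl
  | tail _ hf ih =>
    obtain ⟨v, hv, rfl⟩ := hf
    refine ih.tail ⟨v, ?_, (S.fire_add_particles v hv m).symm⟩
    simp only [Pi.add_apply]
    omega

lemma reaches_add {σ₁ σ₂ τ₁ τ₂ : S.PConf} {ρ κ κ' : S.RConf} (h₁ : S.Reaches (σ₁, ρ) (τ₁, κ))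
    (h₂ : S.Reaches (σ₂, κ) (τ₂, κ')) : S.Reaches (σ₁ + σ₂, ρ) (τ₁ + τ₂, κ') := by
  refine (S.reaches_add_particles h₁ σ₂).trans ?_
  simpa only [add_comm τ₁] using S.reaches_add_particles h₂ τ₁

lemma reaches_sum {ι : Type*} (U : Finset ι) (a b : ι → S.PConf) (ρ : S.RConf)
    (h : ∀ i ∈ U, S.Reaches (a i, ρ) (b i, ρ)) :
    S.Reaches (∑ i ∈ U, a i, ρ) (∑ i ∈ U, b i, ρ) := by
  classical
  induction U using Finset.induction_on with
  | empty => exact ReflTransGen.refl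
  | insert i U hi ih =>
    rw [sum_insert hi, sum_insert hi]
    exact S.reaches_add (h i (mem_insert_self i U))
      (ih fun j hj => h j (mem_insert_of_mem hj))

lemma step_of_mem {p : V × S.RConf} (h : p.1 ∈ S.T) : S.step p = p := by
  rw [step, dif_pos h]

lemma step_of_notMem {p : V × S.RConf} (h : p.1 ∉ S.T) :
    S.step p = (S.head (S.next (p.2.1 ⟨p.1, h⟩)), S.turn ⟨p.1, h⟩ p.2) := by
  rw [step, dif_neg h]
  rfl

lemma rotor_iterate_step (x : V) (ρ : S.RConf) (z : S.V0) (n : ℕ) :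
    (S.step^[n] (x, ρ)).2.1 z =
      S.next^[Nat.count (fun i => (S.step^[i] (x, ρ)).1 = z.1) n] (ρ.1 z) := by
  induction n with
  | zero => rfl
  | succ n ih =>
    rw [Nat.count_succ, iterate_succ_apply']
    set p := S.step^[n] (x, ρ)
    by_cases hT : p.1 ∈ S.T
    · have : p.1 ≠ z.1 := fun h => z.2 (h ▸ hT)
      rw [S.step_of_mem hT, ih, if_neg this, add_zero]
    · rw [S.step_of_notMem hT]
      rcases eq_or_ne z ⟨p.1, hT⟩ with rfl | hz
      · rw [if_pos rfl, iterate_succ_apply', ← ih]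
        exact update_self _ _ _
      · rw [if_neg fun h => hz (Subtype.ext h.symm), add_zero, ← ih]
        exact update_of_ne hz _ _

/-- The `k`-th visit to `z` leaves along `next^[k+1] (ρ z)`, and these run periodically
through all arcs out of `z`. -/
lemma infinite_visits_head {x : V} {ρ : S.RConf} {z : S.V0}
    (hz : {n | (S.step^[n] (x, ρ)).1 = z.1}.Infinite) {e : E} (he : S.src e = z.1) :
    {n | (S.step^[n] (x, ρ)).1 = S.head e}.Infinite := by
  set visit : ℕ → Prop := fun i => (S.step^[i] (x, ρ)).1 = z.1
  refine Set.infinite_of_forall_exists_gt fun K => ?_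
  have hsrc : S.src e = S.src (S.next (ρ.1 z)) := by rw [S.next_src, ρ.2, he]
  obtain ⟨k, hKk, hk⟩ := S.exists_ge_iterate_next_eq hsrc K
  have hvisit : visit (Nat.nth visit k) := Nat.nth_mem_of_infinite hz k
  refine ⟨Nat.nth visit k + 1, ?_, ?_⟩
  · have hnotT : (S.step^[Nat.nth visit k] (x, ρ)).1 ∉ S.T := hvisit ▸ z.2
    have hrotor := S.rotor_iterate_step x ρ z (Nat.nth visit k)
    rw [Nat.count_nth_of_infinite hz] at hrotor
    simp only [Set.mem_ofPred_eq, iterate_succ_apply', S.step_of_notMem hnotT]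
    rw [show (⟨_, hnotT⟩ : S.V0) = z from Subtype.ext hvisit, hrotor,
      ← iterate_succ_apply' S.next, iterate_succ_apply, hk]
  · exact Nat.lt_succ_of_le (hKk.trans ((Nat.nth_strictMono hz).id_le k))

/-- Otherwise the vertices visited infinitely often would be closed under arcs, hence by
strong connectivity contain a target vertex. -/
lemma exists_iterate_step_mem (x : V) (ρ : S.RConf) : ∃ n, (S.step^[n] (x, ρ)).1 ∈ S.T := by
  by_contra! hT
  have closed : ∀ a b : V, ReflTransGen (fun a b => ∃ e : E, S.src e = a ∧ S.head e = b) a b →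
      {n | (S.step^[n] (x, ρ)).1 = a}.Infinite → {n | (S.step^[n] (x, ρ)).1 = b}.Infinite := by
    intro a b hab
    induction hab with
    | refl => exact id
    | tail _ hcb ih =>
      rintro ha
      obtain ⟨e, he, rfl⟩ := hcb
      obtain ⟨n, hn⟩ := (ih ha).nonempty
      exact S.infinite_visits_head (z := ⟨_, hn ▸ hT n⟩) (ih ha) he
  obtain ⟨z, hz⟩ := Finite.exists_infinite_fiber fun n => (S.step^[n] (x, ρ)).1
  obtain ⟨t, ht⟩ := S.T_nonempty
  obtain ⟨n, hn⟩ := (closed z t (S.strongly_connected z t) (Set.infinite_coe_iff.mp hz)).nonempty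
  exact hT n (hn ▸ ht)

lemma reaches_step (p : V × S.RConf) :
    S.Reaches (S.particle p.1, p.2) (S.particle (S.step p).1, (S.step p).2) := by
  by_cases hT : p.1 ∈ S.T
  · rw [S.step_of_mem hT]
  · rw [S.step_of_notMem hT, S.particle_eq_single hT]
    exact ReflTransGen.single (S.fires_single _ _)

lemma reaches_iterate_step (n : ℕ) (p : V × S.RConf) :
    S.Reaches (S.particle p.1, p.2) (S.particle (S.step^[n] p).1, (S.step^[n] p).2) := by
  induction n with
  | zero => exact ReflTransGen.refl
  | succ n ih => exact ih.trans (by rw [iterate_succ_apply']; exact S.reaches_step _)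

lemma reaches_addAt (v : S.V0) (ρ : S.RConf) : S.Reaches (Pi.single v 1, ρ) (0, S.addAt v ρ) := by
  classical
  have h := S.exists_iterate_step_mem v.1 ρ
  have hroute : S.route v.1 ρ = S.step^[Nat.find h] (v.1, ρ) := by rw [route, dif_pos h]
  have hT : (S.route v.1 ρ).1 ∈ S.T := by
    rw [hroute]
    exact Nat.find_spec h
  have hreach := S.reaches_iterate_step (Nat.find h) (v.1, ρ)
  dsimp only at hreach
  rwa [← hroute, S.particle_eq_zero hT, S.particle_eq_single v.2] at hreach

lemma reaches_iterate_addAt (v : S.V0) (k : ℕ) (ρ : S.RConf) :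
    S.Reaches (Pi.single v k, ρ) (0, (S.addAt v)^[k] ρ) := by
  induction k generalizing ρ with
  | zero => simpa using ReflTransGen.refl
  | succ k ih =>
    rw [iterate_succ_apply, add_comm k 1, Pi.single_add, ← zero_add 0]
    exact S.reaches_add (S.reaches_addAt v ρ) (ih _)

lemma reaches_act (σ : S.PConf) (ρ : S.RConf) : S.Reaches (σ, ρ) (0, S.act σ ρ) := by
  have hfold : ∀ l : List S.V0, S.Reaches ((l.map fun v => Pi.single v (σ v)).sum, ρ)
      (0, l.foldr (fun v r => (S.addAt v)^[σ v] r) ρ) := by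
    intro l
    induction l with
    | nil => exact ReflTransGen.refl
    | cons v l ih =>
      rw [List.map_cons, List.sum_cons, add_comm, List.foldr_cons, ← zero_add 0]
      exact S.reaches_add ih (S.reaches_iterate_addAt v _ _)
  have h := hfold univ.toList
  rw [sum_map_toList, univ_sum_single] at h
  exact h

lemma act_eq_of_reaches {σ : S.PConf} {ρ κ : S.RConf} (h : S.Reaches (σ, ρ) (0, κ)) :
    S.act σ ρ = κ :=
  S.reaches_zero_unique (S.reaches_act σ ρ) h

lemma act_add (σ τ : S.PConf) (ρ : S.RConf) : S.act (σ + τ) ρ = S.act τ (S.act σ ρ) := by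
  refine S.act_eq_of_reaches ?_
  rw [← zero_add 0]
  exact S.reaches_add (S.reaches_act σ ρ) (S.reaches_act τ _)

lemma reaches_single_iterate_turn (v : S.V0) (j : ℕ) (ρ : S.RConf) :
    S.Reaches (Pi.single v j, ρ)
      (∑ i ∈ range j, S.particle (S.head (S.next^[i + 1] (ρ.1 v))), (S.turn v)^[j] ρ) := by
  induction j generalizing ρ with
  | zero => simpa using ReflTransGen.refl
  | succ j ih =>
    rw [sum_range_succ', iterate_succ_apply (S.turn v), add_comm _ (S.particle _), add_comm j 1,
      Pi.single_add]
    refine S.reaches_add (ReflTransGen.single (S.fires_single v ρ)) ?_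
    convert ih (S.turn v ρ) using 4 with i
    rw [turn_apply_self, ← iterate_succ_apply]

lemma sum_particle_head_eq_numArcs (v : V) :
    ∑ e ∈ univ.filter (S.src · = v), S.particle (S.head e) = fun w => S.numArcs v w.1 := by
  ext w
  rw [Finset.sum_apply, numArcs, ← filter_filter, card_filter]
  refine sum_congr rfl fun e _ => ?_
  simp only [particle, eq_comm]

lemma reaches_single_outdeg (v : S.V0) (ρ : S.RConf) :
    S.Reaches (Pi.single v (S.outdeg v.1), ρ) (fun w => S.numArcs v.1 w.1, ρ) := by
  have hsrc : S.src (S.next (ρ.1 v)) = v.1 := by rw [S.next_src, ρ.2]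
  have h := S.reaches_single_iterate_turn v (S.outdeg v.1) ρ
  simp only [iterate_succ_apply] at h
  rwa [S.turn_iterate_outdeg, ← hsrc,
    S.sum_range_outdeg_iterate_next (fun e => S.particle (S.head e)), hsrc,
    sum_particle_head_eq_numArcs] at h

lemma reaches_toppleStep (σ : S.PConf) (ρ : S.RConf) : S.Reaches (σ, ρ) (S.toppleStep σ, ρ) := by
  set U := univ.filter fun v : S.V0 => S.outdeg v.1 ≤ σ v
  set rest : S.PConf := fun v => if S.outdeg v.1 ≤ σ v then σ v - S.outdeg v.1 else σ v
  have hσ : σ = rest + ∑ v ∈ U, Pi.single v (S.outdeg v.1) := by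
    ext v
    simp only [rest, U, Pi.add_apply, Finset.sum_apply, Pi.single_apply, sum_ite_eq, mem_filter,
      mem_univ, true_and]
    split_ifs <;> omega
  have htopple : S.toppleStep σ = rest + ∑ v ∈ U, fun w => S.numArcs v.1 w.1 := by
    ext w
    simp only [toppleStep, rest, U, Pi.add_apply, Finset.sum_apply, sum_filter, ite_apply,
      Pi.zero_apply]
  have h := S.reaches_add (ReflTransGen.refl (a := (rest, ρ)))
    (S.reaches_sum U _ _ ρ fun v _ => S.reaches_single_outdeg v ρ)
  rwa [← hσ, ← htopple] at h

lemma reaches_stabilize (σ : S.PConf) (ρ : S.RConf) : S.Reaches (σ, ρ) (S.stabilize σ, ρ) := by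
  have hiter : ∀ n, S.Reaches (σ, ρ) (S.toppleStep^[n] σ, ρ) := by
    intro n
    induction n with
    | zero => exact ReflTransGen.refl
    | succ n ih => exact ih.trans (by rw [iterate_succ_apply']; exact S.reaches_toppleStep _ ρ)
  unfold stabilize
  split
  · exact hiter _
  · exact ReflTransGen.refl

lemma act_stabilize (σ : S.PConf) (ρ : S.RConf) : S.act (S.stabilize σ) ρ = S.act σ ρ :=
  (S.act_eq_of_reaches ((S.reaches_stabilize σ ρ).trans (S.reaches_act _ ρ))).symm

end RotorSystem

/-- **Lemma (characterizations of equivalence of rotor configurations).**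
For rotor configurations `ρ, ρ'` the following are equivalent:
(a) `σρ = σρ'` for some particle configuration `σ`;
(b) `σρ = σρ'` for every recurrent configuration `σ ∈ S(G/T)`;
(c) `eρ = eρ'`, where `e` is the identity element of the sandpile group `S(G/T)`;
(d) `σρ = σρ'` for every particle configuration `σ ≥ e`. -/
theorem requiv_tfae {V E : Type} [Fintype V] [DecidableEq V] [Fintype E]
    [DecidableEq E] (S : RotorSystem V E)
    (e : S.PConf) (he : S.IsSandpileIdentity e) (ρ ρ' : S.RConf) :
    List.TFAE
      [∃ σ : S.PConf, S.act σ ρ = S.act σ ρ',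
       ∀ σ : S.PConf, S.IsRecurrent σ → S.act σ ρ = S.act σ ρ',
       S.act e ρ = S.act e ρ',
       ∀ σ : S.PConf, (∀ v : S.V0, e v ≤ σ v) → S.act σ ρ = S.act σ ρ'] := by
  tfae_have 1 → 3 := by
    rintro ⟨σ, h⟩
    obtain ⟨τ, hτ⟩ := he.1.2 σ
    have he_act : ∀ κ, S.act e κ = S.act τ (S.act σ κ) := fun κ => by
      rw [hτ, S.act_stabilize, add_comm, S.act_add]
    rw [he_act, he_act, h]
  tfae_have 3 → 2 := by
    intro h σ hσ
    have hσ_act : ∀ κ, S.act σ κ = S.act σ (S.act e κ) := fun κ => by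
      rw [← S.act_add, ← S.act_stabilize (e + σ), he.2 σ hσ]
    rw [hσ_act, hσ_act ρ', h]
  tfae_have 2 → 3 := fun h => h e he.1
  tfae_have 3 → 4 := by
    intro h σ hσ
    obtain ⟨τ, rfl⟩ : ∃ τ, σ = e + τ := ⟨σ - e, by ext v; simp [Nat.add_sub_cancel' (hσ v)]⟩
    rw [S.act_add, S.act_add, h]
  tfae_have 4 → 1 := fun h => ⟨e, h e fun _ => le_rfl⟩
  tfae_finish
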